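/- Let $p_0$ and $p_1$ be uniformly continuous probability densities on $\mathbb{R}$ and $t \in [0,1]$, and set $p_t := (1-t)p_0 + t p_1$. Define, for any uniformly continuous density $q$, $i^*(q) := -\inf_{\psi \in \Psi_\downarrow(q)} D_q(\psi)$, where $\Psi_\downarrow(q)$ is the set of decreasing right-continuous $\psi$ with $\int \psi^2 q < \infty$ and $D_q(\psi) := \int_\mathbb{R} \psi^2 q + 2\int_{\mathcal{S}(q)} q\,d\psi$. Then $i^*(p_t) \leq (1-t)\, i^*(p_0) + t\, i^*(p_1)$; that is, $q \mapsto i^*(q)$ is convex. -/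

import Mathlib

/-!
For a fixed `ψ`, the objective `D_q(ψ)` is additive and positively homogeneous in `q` on
continuous nonnegative densities: continuity makes `{q > 0}` open, hence contained in `𝒮(q)`,
so the Stieltjes integral over `𝒮(q)` is one over all of `ℝ`. For `t ∈ (0,1)` every
`ψ ∈ Ψ↓(p_t)` lies in `Ψ↓(p₀) ∩ Ψ↓(p₁)` and `D_{p_t}(ψ) = (1-t) D_{p₀}(ψ) + t D_{p₁}(ψ)`;
the infimum of a sum dominates the sum of the infima.
-/

open MeasureTheory

/-- The score-matching objective `D_q(ψ) = ∫ ψ² q + 2 ∫_{𝒮(q)} q dψ`, parametrized by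
`ψ = -f` for a Stieltjes function `f` (so that `ψ` is decreasing and right-continuous and
the Lebesgue–Stieltjes integral `∫_{𝒮(q)} q dψ` equals `-∫_{𝒮(q)} q dμ_f`), with values
in `EReal` (it may be `-∞`). Here `𝒮(q)` is the interior of the convex hull of the
support of `q`. -/
noncomputable def scoreObj (q : ℝ → ℝ) (f : StieltjesFunction ℝ) : EReal :=
  ((∫ z, (f z) ^ 2 * q z : ℝ) : EReal)
    - 2 * ((∫⁻ z in interior (convexHull ℝ {z | 0 < q z}),
        ENNReal.ofReal (q z) ∂f.measure : ENNReal) : EReal)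

/-- The antitonic information `i*(q) = - inf_{ψ ∈ Ψ↓(q)} D_q(ψ)`, where `Ψ↓(q)` is the set
of decreasing right-continuous `ψ` with `∫ ψ² q < ∞`. -/
noncomputable def antitonicInfo (q : ℝ → ℝ) : EReal :=
  - sInf (scoreObj q '' {f : StieltjesFunction ℝ | Integrable (fun z => (f z) ^ 2 * q z)})

/-- `Ψ↓(q)`, in the parametrization `f = -ψ` of `scoreObj`. -/
def scoreClass (q : ℝ → ℝ) : Set (StieltjesFunction ℝ) :=
  {f | Integrable (fun z => (f z) ^ 2 * q z)}

lemma mem_scoreClass_of_le_const_mul {p q : ℝ → ℝ} (hp : Measurable p) (hp0 : ∀ z, 0 ≤ p z)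
    {c : ℝ} (hpq : ∀ z, p z ≤ c * q z) {f : StieltjesFunction ℝ} (hf : f ∈ scoreClass q) :
    f ∈ scoreClass p := by
  refine (hf.const_mul c).mono' ((f.mono.measurable.pow_const 2).mul hp).aestronglyMeasurable
    (ae_of_all _ fun z => ?_)
  rw [Real.norm_of_nonneg (mul_nonneg (sq_nonneg _) (hp0 z))]
  calc f z ^ 2 * p z ≤ f z ^ 2 * (c * q z) := mul_le_mul_of_nonneg_left (hpq z) (sq_nonneg _)
    _ = c * (f z ^ 2 * q z) := by ring

lemma setLIntegral_interior_convexHull_support (μ : Measure ℝ) {q : ℝ → ℝ} (hq : Continuous q) :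
    ∫⁻ z in interior (convexHull ℝ {z | 0 < q z}), ENNReal.ofReal (q z) ∂μ
      = ∫⁻ z, ENNReal.ofReal (q z) ∂μ := by
  refine setLIntegral_eq_of_support_subset fun z hz => ?_
  refine interior_maximal (subset_convexHull ℝ _) (isOpen_lt continuous_const hq) ?_
  simpa using hz

lemma scoreObj_eq_of_continuous {q : ℝ → ℝ} (hq : Continuous q) (f : StieltjesFunction ℝ) :
    scoreObj q f = ((∫ z, (f z) ^ 2 * q z : ℝ) : EReal)
      - 2 * ((∫⁻ z, ENNReal.ofReal (q z) ∂f.measure : ENNReal) : EReal) := by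
  rw [scoreObj, setLIntegral_interior_convexHull_support f.measure hq]

lemma two_mul_coe_ennreal_ne_bot (L : ENNReal) : 2 * (L : EReal) ≠ ⊥ :=
  (EReal.bot_lt_zero.trans_le (mul_nonneg zero_le_two (EReal.coe_ennreal_nonneg L))).ne'

lemma scoreObj_ne_top (q : ℝ → ℝ) (f : StieltjesFunction ℝ) : scoreObj q f ≠ ⊤ := by
  rw [scoreObj, sub_eq_add_neg]
  exact EReal.add_ne_top (EReal.coe_ne_top _) (by simpa using two_mul_coe_ennreal_ne_bot _)

lemma scoreObj_const_mul {c : ℝ} (hc : 0 < c) (q : ℝ → ℝ) (f : StieltjesFunction ℝ) :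
    scoreObj (fun z => c * q z) f = c * scoreObj q f := by
  have hsupp : {z | 0 < c * q z} = {z | 0 < q z} := by
    ext z; simp [mul_pos_iff_of_pos_left hc]
  have hint : ∫ z, (f z) ^ 2 * (c * q z) = c * ∫ z, (f z) ^ 2 * q z := by
    simp_rw [mul_left_comm _ c]; exact integral_const_mul c _
  have hlint (s : Set ℝ) : ∫⁻ z in s, ENNReal.ofReal (c * q z) ∂f.measure
      = ENNReal.ofReal c * ∫⁻ z in s, ENNReal.ofReal (q z) ∂f.measure := by
    simp_rw [ENNReal.ofReal_mul hc.le]; exact lintegral_const_mul' _ _ ENNReal.ofReal_ne_top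
  rw [scoreObj, scoreObj, hsupp, hint, hlint,
    EReal.mul_sub_of_nonneg_of_ne_top (EReal.coe_nonneg.2 hc.le) (EReal.coe_ne_top c),
    EReal.coe_ennreal_mul, EReal.coe_ennreal_ofReal, max_eq_left hc.le, EReal.coe_mul,
    mul_left_comm]

lemma scoreObj_add {p q : ℝ → ℝ} (hp : Continuous p) (hq : Continuous q)
    (hp0 : ∀ z, 0 ≤ p z) (hq0 : ∀ z, 0 ≤ q z) {f : StieltjesFunction ℝ}
    (hfp : f ∈ scoreClass p) (hfq : f ∈ scoreClass q) :
    scoreObj (fun z => p z + q z) f = scoreObj p f + scoreObj q f := by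
  have hint : ∫ z, (f z) ^ 2 * (p z + q z)
      = (∫ z, (f z) ^ 2 * p z) + ∫ z, (f z) ^ 2 * q z := by
    simp_rw [mul_add]; exact integral_add hfp hfq
  have hlint : ∫⁻ z, ENNReal.ofReal (p z + q z) ∂f.measure
      = ∫⁻ z, ENNReal.ofReal (p z) ∂f.measure + ∫⁻ z, ENNReal.ofReal (q z) ∂f.measure := by
    simp_rw [ENNReal.ofReal_add (hp0 _) (hq0 _)]
    exact lintegral_add_left hp.measurable.ennreal_ofReal _
  rw [scoreObj_eq_of_continuous hp, scoreObj_eq_of_continuous hq,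
    scoreObj_eq_of_continuous (q := fun z => p z + q z) (hp.add hq),
    hint, hlint, EReal.coe_add, EReal.coe_ennreal_add,
    EReal.left_distrib_of_nonneg (EReal.coe_ennreal_nonneg _) (EReal.coe_ennreal_nonneg _),
    EReal.add_sub_add_comm (.inl (two_mul_coe_ennreal_ne_bot _))
      (.inr (two_mul_coe_ennreal_ne_bot _))]

lemma neg_scoreObj_le_antitonicInfo {q : ℝ → ℝ} {f : StieltjesFunction ℝ}
    (hf : f ∈ scoreClass q) : -scoreObj q f ≤ antitonicInfo q :=
  EReal.neg_le_neg_iff.2 (sInf_le ⟨f, hf, rfl⟩)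

lemma antitonicInfo_le_of_forall {q : ℝ → ℝ} {x : EReal}
    (h : ∀ f ∈ scoreClass q, -scoreObj q f ≤ x) : antitonicInfo q ≤ x := by
  rw [antitonicInfo, EReal.neg_le]
  refine le_sInf ?_
  rintro _ ⟨f, hf, rfl⟩
  exact EReal.neg_le.1 (h f hf)

theorem antitonicInfo_mixture_le {p0 p1 : ℝ → ℝ} (hp0 : Continuous p0) (hp1 : Continuous p1)
    (h0n : ∀ z, 0 ≤ p0 z) (h1n : ∀ z, 0 ≤ p1 z) {c0 c1 : ℝ} (hc0 : 0 < c0) (hc1 : 0 < c1) :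
    antitonicInfo (fun z => c0 * p0 z + c1 * p1 z)
      ≤ (c0 : EReal) * antitonicInfo p0 + (c1 : EReal) * antitonicInfo p1 := by
  refine antitonicInfo_le_of_forall fun f hf => ?_
  have hf0 : f ∈ scoreClass p0 := mem_scoreClass_of_le_const_mul hp0.measurable h0n
    (fun z => by rw [inv_mul_eq_div, le_div_iff₀' hc0]; nlinarith [h1n z]) hf
  have hf1 : f ∈ scoreClass p1 := mem_scoreClass_of_le_const_mul hp1.measurable h1n
    (fun z => by rw [inv_mul_eq_div, le_div_iff₀' hc1]; nlinarith [h0n z]) hf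
  have hcf0 : f ∈ scoreClass (fun z => c0 * p0 z) := (hf0.const_mul c0).congr
    (ae_of_all _ fun z => by ring)
  have hcf1 : f ∈ scoreClass (fun z => c1 * p1 z) := (hf1.const_mul c1).congr
    (ae_of_all _ fun z => by ring)
  rw [scoreObj_add (p := fun z => c0 * p0 z) (q := fun z => c1 * p1 z)
      (continuous_const.mul hp0) (continuous_const.mul hp1)
      (fun z => mul_nonneg hc0.le (h0n z)) (fun z => mul_nonneg hc1.le (h1n z)) hcf0 hcf1,
    EReal.neg_add (.inr (scoreObj_ne_top _ _)) (.inl (scoreObj_ne_top _ _)),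
    scoreObj_const_mul hc0, scoreObj_const_mul hc1, sub_eq_add_neg, ← mul_neg, ← mul_neg]
  exact add_le_add
    (mul_le_mul_of_nonneg_left (neg_scoreObj_le_antitonicInfo hf0) (EReal.coe_nonneg.2 hc0.le))
    (mul_le_mul_of_nonneg_left (neg_scoreObj_le_antitonicInfo hf1) (EReal.coe_nonneg.2 hc1.le))

theorem stmt18_general (p0 p1 : ℝ → ℝ) (t : ℝ) (ht : t ∈ Set.Icc (0:ℝ) 1)
    (h0u : UniformContinuous p0) (h1u : UniformContinuous p1)
    (h0n : ∀ z, 0 ≤ p0 z) (h1n : ∀ z, 0 ≤ p1 z) :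
    antitonicInfo (fun z => (1 - t) * p0 z + t * p1 z)
      ≤ ((1 - t : ℝ) : EReal) * antitonicInfo p0 + ((t : ℝ) : EReal) * antitonicInfo p1 := by
  obtain ⟨ht0, ht1⟩ := ht
  rcases ht0.eq_or_lt with rfl | ht0
  · norm_num
  rcases ht1.eq_or_lt with rfl | ht1
  · norm_num
  exact antitonicInfo_mixture_le h0u.continuous h1u.continuous h0n h1n (sub_pos.2 ht1) ht0

/-- Convexity of the antitonic information: for uniformly continuous densities `p₀, p₁` and
`t ∈ [0,1]`, `i*((1-t)p₀ + t p₁) ≤ (1-t) i*(p₀) + t i*(p₁)`. -/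
theorem stmt18 (p0 p1 : ℝ → ℝ) (t : ℝ) (ht : t ∈ Set.Icc (0:ℝ) 1)
    (h0u : UniformContinuous p0) (h1u : UniformContinuous p1)
    (h0n : ∀ z, 0 ≤ p0 z) (h1n : ∀ z, 0 ≤ p1 z)
    (h0i : ∫ z, p0 z = 1) (h1i : ∫ z, p1 z = 1) :
    antitonicInfo (fun z => (1 - t) * p0 z + t * p1 z)
      ≤ ((1 - t : ℝ) : EReal) * antitonicInfo p0 + ((t : ℝ) : EReal) * antitonicInfo p1 :=
  stmt18_general p0 p1 t ht h0u h1u h0n h1n
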